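/- Let F be a field of characteristic 0 and q ≥ 1, t = 2^q. The family {c_g : the number of indices i with g i = (1,1) is even} is a basis of the space of symmetric t×t matrices over F, and the family {c_g : the number of indices i with g i = (1,1) is odd} is a basis of the space of skew-symmetric t×t matrices over F. In particular these families have cardinalities t(t+1)/2 and t(t−1)/2 respectively. -/

import Mathlib

/-!
Every factor `σ_u` is symmetric except `σ₃ = σ_(1,1)`, which is skew, so `c_gᵀ = (-1)^k c_g`
where `k` is the number of `σ₃`-factors of `c_g`. The form `⟨A, B⟩ = tr (Aᵀ B)` is
multiplicative on Kronecker products and the `σ_u` are orthogonal for it with `⟨σ_u, σ_u⟩ = 2`;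
hence the `4^q` matrices `c_g` are orthogonal with `⟨c_g, c_g⟩ = 2^q ≠ 0` and form a basis of
all matrices. As `2 ≠ 0`, a matrix both symmetric and skew vanishes; so the span of the even
family, which consists of symmetric matrices, and the span of the odd family, which consists of
skew ones, together span everything and must be the whole symmetric and skew subspaces.
The counts follow from `∑_g (-1)^k = (1 + 1 + 1 - 1)^q = 2^q`.
-/

open Matrix

def sigmaP (F : Type*) [Field F] (u : ZMod 2 × ZMod 2) : Matrix (Fin 2) (Fin 2) F :=
  if u = (0, 0) then !![1, 0; 0, 1]
  else if u = (1, 0) then !![1, 0; 0, -1]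
  else if u = (0, 1) then !![0, 1; 1, 0]
  else !![0, 1; -1, 0]

def pauliKron (F : Type*) [Field F] : {q : ℕ} → (Fin q → ZMod 2 × ZMod 2) →
    Matrix (Fin (2 ^ q)) (Fin (2 ^ q)) F
  | 0, _ => 1
  | q + 1, g =>
      Matrix.reindex (finProdFinEquiv.trans (finCongr (pow_succ 2 q).symm))
        (finProdFinEquiv.trans (finCongr (pow_succ 2 q).symm))
        (Matrix.kroneckerMap (· * ·) (pauliKron F (fun i => g i.castSucc))
          (sigmaP F (g (Fin.last q))))

def symmMatrices (F : Type*) [Field F] (n : Type*) [Fintype n] :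
    Submodule F (Matrix n n F) where
  carrier := {A | Aᵀ = A}
  zero_mem' := Matrix.transpose_zero
  add_mem' := by
    intro a b ha hb
    simp only [Set.mem_setOf_eq] at *
    rw [Matrix.transpose_add, ha, hb]
  smul_mem' := by
    intro c a ha
    simp only [Set.mem_setOf_eq] at *
    rw [Matrix.transpose_smul, ha]

def skewMatrices (F : Type*) [Field F] (n : Type*) [Fintype n] :
    Submodule F (Matrix n n F) where
  carrier := {A | Aᵀ = -A}
  zero_mem' := by simp
  add_mem' := by
    intro a b ha hb
    simp only [Set.mem_setOf_eq] at *
    rw [Matrix.transpose_add, ha, hb, neg_add]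
  smul_mem' := by
    intro c a ha
    simp only [Set.mem_setOf_eq] at *
    rw [Matrix.transpose_smul, ha, smul_neg]

open Kronecker

theorem LinearIndependent.exists_basis_of_span_eq {R ι M : Type*} [Ring R] [AddCommGroup M]
    [Module R M] {v : ι → M} (hv : LinearIndependent R v) {S : Submodule R M}
    (hS : Submodule.span R (Set.range v) = S) :
    ∃ b : Module.Basis ι R S, ∀ i, (b i : M) = v i :=
  ⟨(Module.Basis.span hv).map (LinearEquiv.ofEq _ _ hS), fun i => by
    rw [Module.Basis.map_apply, LinearEquiv.coe_ofEq_apply, Module.Basis.span_apply]⟩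

theorem Submodule.span_range_restrict_sup_span_range_restrict {R ι M : Type*} [Semiring R]
    [AddCommMonoid M] [Module R M] (v : ι → M) {p r : ι → Prop} (hpr : ∀ i, p i ∨ r i) :
    span R (Set.range fun i : {i // p i} => v i) ⊔ span R (Set.range fun i : {i // r i} => v i) =
      span R (Set.range v) := by
  rw [← span_union]
  congr 1
  ext x
  simp only [Set.mem_union, Set.mem_range, Subtype.exists]
  constructor
  · rintro (⟨i, -, rfl⟩ | ⟨i, -, rfl⟩) <;> exact ⟨i, rfl⟩
  · rintro ⟨i, rfl⟩
    exact (hpr i).imp (fun hi => ⟨i, hi, rfl⟩) (fun hi => ⟨i, hi, rfl⟩)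

theorem Matrix.linearIndependent_of_trace_transpose_mul {F ι n : Type*} [Field F] [Fintype ι]
    [Fintype n] [DecidableEq ι] {v : ι → Matrix n n F} {c : F} (hc : c ≠ 0)
    (hv : ∀ i j, trace ((v i)ᵀ * v j) = if i = j then c else 0) : LinearIndependent F v := by
  rw [Fintype.linearIndependent_iff]
  intro a ha i
  have key : trace ((v i)ᵀ * ∑ j, a j • v j) = a i * c := by
    simp only [Matrix.mul_sum, Matrix.mul_smul, trace_sum, trace_smul, hv, smul_eq_mul,
      mul_ite, mul_zero, Finset.sum_ite_eq, Finset.mem_univ, if_true]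
  rw [ha, Matrix.mul_zero, trace_zero] at key
  exact (mul_eq_zero.mp key.symm).resolve_right hc

theorem Matrix.trace_submatrix_equiv {R m n : Type*} [AddCommMonoid R] [Fintype m] [Fintype n]
    (e : m ≃ n) (A : Matrix n n R) : trace (A.submatrix e e) = trace A :=
  e.sum_comp fun j => A j j

theorem Matrix.trace_transpose_kronecker_mul_kronecker {R m n : Type*} [CommSemiring R]
    [Fintype m] [Fintype n] (A C : Matrix m m R) (B D : Matrix n n R) :
    trace ((A ⊗ₖ B)ᵀ * (C ⊗ₖ D)) = trace (Aᵀ * C) * trace (Bᵀ * D) := by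
  rw [← kroneckerMap_transpose, ← mul_kronecker_mul, trace_kronecker]

theorem two_mul_card_filter_even {α : Type*} [Fintype α] (k : α → ℕ) :
    (2 * (Finset.univ.filter fun a => Even (k a)).card : ℤ) =
      Fintype.card α + ∑ a, (-1) ^ k a := by
  calc (2 * (Finset.univ.filter fun a => Even (k a)).card : ℤ)
      = ∑ a, if Even (k a) then 2 else 0 := by
        rw [← Finset.sum_filter, Finset.sum_const, nsmul_eq_mul, mul_comm]
    _ = ∑ a, (1 + (-1) ^ k a) := by
        refine Finset.sum_congr rfl fun a _ => ?_
        rcases Nat.even_or_odd (k a) with h | h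
        · rw [if_pos h, h.neg_one_pow]; norm_num
        · rw [if_neg (Nat.not_even_iff_odd.mpr h), h.neg_one_pow]; norm_num
    _ = Fintype.card α + ∑ a, (-1) ^ k a := by
        rw [Finset.sum_add_distrib, Finset.sum_const, Finset.card_univ, nsmul_one]

theorem two_mul_card_filter_odd {α : Type*} [Fintype α] (k : α → ℕ) :
    (2 * (Finset.univ.filter fun a => Odd (k a)).card : ℤ) =
      Fintype.card α - ∑ a, (-1) ^ k a := by
  have hsplit := Finset.card_filter_add_card_filter_not (s := Finset.univ) (fun a => Even (k a))
  simp only [Nat.not_even_iff_odd, Finset.card_univ] at hsplit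
  have heven := two_mul_card_filter_even k
  rw [← hsplit] at heven ⊢
  push_cast at heven ⊢
  linarith

def countSigma3 {q : ℕ} (g : Fin q → ZMod 2 × ZMod 2) : ℕ :=
  (Finset.univ.filter fun i => g i = (1, 1)).card

theorem countSigma3_succ {q : ℕ} (g : Fin (q + 1) → ZMod 2 × ZMod 2) :
    countSigma3 g =
      countSigma3 (fun i => g i.castSucc) + if g (Fin.last q) = (1, 1) then 1 else 0 := by
  rw [countSigma3, countSigma3, Finset.card_filter, Finset.card_filter, Fin.sum_univ_castSucc]

theorem sum_neg_one_pow_countSigma3 (q : ℕ) :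
    ∑ g : Fin q → ZMod 2 × ZMod 2, (-1 : ℤ) ^ countSigma3 g = 2 ^ q := by
  calc ∑ g : Fin q → ZMod 2 × ZMod 2, (-1 : ℤ) ^ countSigma3 g
      = ∑ g : Fin q → ZMod 2 × ZMod 2, ∏ i, if g i = (1, 1) then -1 else 1 := by
        refine Finset.sum_congr rfl fun g _ => ?_
        rw [Finset.prod_ite, Finset.prod_const, Finset.prod_const, one_pow, mul_one, countSigma3]
    _ = ∏ _i : Fin q, ∑ u : ZMod 2 × ZMod 2, if u = (1, 1) then -1 else 1 :=
        (Fintype.prod_sum fun _ u => if u = (1, 1) then (-1 : ℤ) else 1).symm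
    _ = 2 ^ q := by
        rw [show ∑ u : ZMod 2 × ZMod 2, (if u = (1, 1) then (-1 : ℤ) else 1) = 2 by decide,
          Finset.prod_const, Finset.card_univ, Fintype.card_fin]

section Pauli

variable {F : Type*} [Field F]

theorem ZMod.two_prod_cases (u : ZMod 2 × ZMod 2) :
    u = (0, 0) ∨ u = (1, 0) ∨ u = (0, 1) ∨ u = (1, 1) := by
  revert u
  decide

theorem sigmaP_zero_zero : sigmaP F (0, 0) = !![1, 0; 0, 1] := if_pos rfl

theorem sigmaP_one_zero : sigmaP F (1, 0) = !![1, 0; 0, -1] := by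
  rw [sigmaP, if_neg (by decide), if_pos rfl]

theorem sigmaP_zero_one : sigmaP F (0, 1) = !![0, 1; 1, 0] := by
  rw [sigmaP, if_neg (by decide), if_neg (by decide), if_pos rfl]

theorem sigmaP_one_one : sigmaP F (1, 1) = !![0, 1; -1, 0] := by
  rw [sigmaP, if_neg (by decide), if_neg (by decide), if_neg (by decide)]

theorem sigmaP_transpose (u : ZMod 2 × ZMod 2) :
    (sigmaP F u)ᵀ = (-1 : F) ^ (if u = (1, 1) then 1 else 0) • sigmaP F u := by
  ext i j
  rcases ZMod.two_prod_cases u with rfl | rfl | rfl | rfl <;> fin_cases i <;> fin_cases j <;>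
    simp [sigmaP_zero_zero, sigmaP_one_zero, sigmaP_zero_one, sigmaP_one_one]

theorem trace_transpose_sigmaP_mul (u v : ZMod 2 × ZMod 2) :
    trace ((sigmaP F u)ᵀ * sigmaP F v) = if u = v then 2 else 0 := by
  rcases ZMod.two_prod_cases u with rfl | rfl | rfl | rfl <;>
    rcases ZMod.two_prod_cases v with rfl | rfl | rfl | rfl <;>
    norm_num [sigmaP_zero_zero, sigmaP_one_zero, sigmaP_zero_one, sigmaP_one_one,
      trace_fin_two, mul_apply, Fin.sum_univ_two]

theorem pauliKron_succ {q : ℕ} (g : Fin (q + 1) → ZMod 2 × ZMod 2) :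
    pauliKron F g =
      reindex (finProdFinEquiv.trans (finCongr (pow_succ 2 q).symm))
        (finProdFinEquiv.trans (finCongr (pow_succ 2 q).symm))
        (pauliKron F (fun i => g i.castSucc) ⊗ₖ sigmaP F (g (Fin.last q))) :=
  rfl

theorem pauliKron_transpose : ∀ {q : ℕ} (g : Fin q → ZMod 2 × ZMod 2),
    (pauliKron F g)ᵀ = (-1 : F) ^ countSigma3 g • pauliKron F g
  | 0, g => by simp [pauliKron, countSigma3]
  | q + 1, g => by
    rw [pauliKron_succ, countSigma3_succ, reindex_apply, transpose_submatrix,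
      ← kroneckerMap_transpose, pauliKron_transpose, sigmaP_transpose, smul_kronecker,
      kronecker_smul, smul_smul, ← pow_add]
    rfl

theorem trace_transpose_pauliKron_mul : ∀ {q : ℕ} (g h : Fin q → ZMod 2 × ZMod 2),
    trace ((pauliKron F g)ᵀ * pauliKron F h) = if g = h then (2 : F) ^ q else 0
  | 0, g, h => by simp [pauliKron, Subsingleton.elim g h]
  | q + 1, g, h => by
    rw [pauliKron_succ, pauliKron_succ, reindex_apply, reindex_apply, transpose_submatrix,
      submatrix_mul_equiv, trace_submatrix_equiv, trace_transpose_kronecker_mul_kronecker,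
      trace_transpose_pauliKron_mul, trace_transpose_sigmaP_mul, ite_zero_mul_ite_zero,
      ← pow_succ]
    have hgh : g = h ↔ (fun i : Fin q => g i.castSucc) = (fun i => h i.castSucc) ∧
        g (Fin.last q) = h (Fin.last q) := by
      refine ⟨by rintro rfl; exact ⟨rfl, rfl⟩, fun ⟨hinit, hlast⟩ => ?_⟩
      exact funext (Fin.lastCases hlast (congrFun hinit))
    simp only [hgh]

theorem linearIndependent_pauliKron [NeZero (2 : F)] (q : ℕ) :
    LinearIndependent F (pauliKron F (q := q)) :=
  linearIndependent_of_trace_transpose_mul (pow_ne_zero q two_ne_zero)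
    trace_transpose_pauliKron_mul

theorem span_range_pauliKron [NeZero (2 : F)] (q : ℕ) :
    Submodule.span F (Set.range (pauliKron F (q := q))) = ⊤ := by
  refine (linearIndependent_pauliKron q).span_eq_top_of_card_eq_finrank ?_
  simp only [Module.finrank_matrix, Module.finrank_self, mul_one, Fintype.card_fun,
    Fintype.card_prod, ZMod.card, Fintype.card_fin, mul_pow]

theorem pauliKron_mem_symmMatrices {q : ℕ} {g : Fin q → ZMod 2 × ZMod 2}
    (hg : Even (countSigma3 g)) : pauliKron F g ∈ symmMatrices F (Fin (2 ^ q)) := by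
  change (pauliKron F g)ᵀ = pauliKron F g
  rw [pauliKron_transpose, hg.neg_one_pow, one_smul]

theorem pauliKron_mem_skewMatrices {q : ℕ} {g : Fin q → ZMod 2 × ZMod 2}
    (hg : Odd (countSigma3 g)) : pauliKron F g ∈ skewMatrices F (Fin (2 ^ q)) := by
  change (pauliKron F g)ᵀ = -pauliKron F g
  rw [pauliKron_transpose, hg.neg_one_pow, neg_one_smul]

theorem disjoint_symmMatrices_skewMatrices [NeZero (2 : F)] {n : Type*} [Fintype n] :
    Disjoint (symmMatrices F n) (skewMatrices F n) := by
  rw [Submodule.disjoint_def]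
  intro A (hsymm : Aᵀ = A) (hskew : Aᵀ = -A)
  have h2A : (2 : F) • A = 0 := by
    rw [two_smul]
    exact eq_neg_iff_add_eq_zero.mp (hsymm.symm.trans hskew)
  exact (smul_eq_zero.mp h2A).resolve_left two_ne_zero

variable (F) in
abbrev evenPauliSpan (q : ℕ) : Submodule F (Matrix (Fin (2 ^ q)) (Fin (2 ^ q)) F) :=
  Submodule.span F (Set.range fun g : {g : Fin q → ZMod 2 × ZMod 2 // Even (countSigma3 g)} =>
    pauliKron F g.1)

variable (F) in
abbrev oddPauliSpan (q : ℕ) : Submodule F (Matrix (Fin (2 ^ q)) (Fin (2 ^ q)) F) :=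
  Submodule.span F (Set.range fun g : {g : Fin q → ZMod 2 × ZMod 2 // Odd (countSigma3 g)} =>
    pauliKron F g.1)

theorem evenPauliSpan_le_symmMatrices (q : ℕ) :
    evenPauliSpan F q ≤ symmMatrices F (Fin (2 ^ q)) :=
  Submodule.span_le.mpr <| Set.range_subset_iff.mpr fun g => pauliKron_mem_symmMatrices g.2

theorem oddPauliSpan_le_skewMatrices (q : ℕ) :
    oddPauliSpan F q ≤ skewMatrices F (Fin (2 ^ q)) :=
  Submodule.span_le.mpr <| Set.range_subset_iff.mpr fun g => pauliKron_mem_skewMatrices g.2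

theorem codisjoint_evenPauliSpan_oddPauliSpan [NeZero (2 : F)] (q : ℕ) :
    Codisjoint (evenPauliSpan F q) (oddPauliSpan F q) := by
  rw [codisjoint_iff, Submodule.span_range_restrict_sup_span_range_restrict (pauliKron F)
    fun g => Nat.even_or_odd _, span_range_pauliKron]

theorem evenPauliSpan_eq_symmMatrices [NeZero (2 : F)] (q : ℕ) :
    evenPauliSpan F q = symmMatrices F (Fin (2 ^ q)) :=
  (le_iff_eq_of_codisjoint_of_disjoint (codisjoint_evenPauliSpan_oddPauliSpan (F := F) q)
    (disjoint_symmMatrices_skewMatrices.symm.mono_left (oddPauliSpan_le_skewMatrices q))).mp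
    (evenPauliSpan_le_symmMatrices q)

theorem oddPauliSpan_eq_skewMatrices [NeZero (2 : F)] (q : ℕ) :
    oddPauliSpan F q = skewMatrices F (Fin (2 ^ q)) :=
  (le_iff_eq_of_codisjoint_of_disjoint (codisjoint_evenPauliSpan_oddPauliSpan (F := F) q).symm
    (disjoint_symmMatrices_skewMatrices.mono_left (evenPauliSpan_le_symmMatrices q))).mp
    (oddPauliSpan_le_skewMatrices q)

end Pauli

theorem two_mul_card_filter_even_countSigma3 (q : ℕ) :
    2 * (Finset.univ.filter fun g : Fin q → ZMod 2 × ZMod 2 => Even (countSigma3 g)).card =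
      2 ^ q * (2 ^ q + 1) := by
  have h := two_mul_card_filter_even (countSigma3 (q := q))
  rw [sum_neg_one_pow_countSigma3, Fintype.card_fun, Fintype.card_prod, ZMod.card,
    Fintype.card_fin, mul_pow] at h
  push_cast at h
  zify
  linarith

theorem two_mul_card_filter_odd_countSigma3 (q : ℕ) :
    2 * (Finset.univ.filter fun g : Fin q → ZMod 2 × ZMod 2 => Odd (countSigma3 g)).card =
      2 ^ q * (2 ^ q - 1) := by
  have h := two_mul_card_filter_odd (countSigma3 (q := q))
  rw [sum_neg_one_pow_countSigma3, Fintype.card_fun, Fintype.card_prod, ZMod.card,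
    Fintype.card_fin, mul_pow] at h
  push_cast at h
  zify [Nat.one_le_two_pow]
  linarith

theorem pauliKron_symm_skew_bases_general (F : Type*) [Field F] [CharZero F]
    (q : ℕ) :
    (∃ b : Module.Basis {g : Fin q → ZMod 2 × ZMod 2 //
        Even (Finset.univ.filter fun i => g i = (1, 1)).card} F
        (symmMatrices F (Fin (2 ^ q))),
      ∀ g, (b g : Matrix (Fin (2 ^ q)) (Fin (2 ^ q)) F) = pauliKron F g.1) ∧
    (∃ b : Module.Basis {g : Fin q → ZMod 2 × ZMod 2 //
        Odd (Finset.univ.filter fun i => g i = (1, 1)).card} F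
        (skewMatrices F (Fin (2 ^ q))),
      ∀ g, (b g : Matrix (Fin (2 ^ q)) (Fin (2 ^ q)) F) = pauliKron F g.1) ∧
    Nat.card {g : Fin q → ZMod 2 × ZMod 2 //
        Even (Finset.univ.filter fun i => g i = (1, 1)).card} =
      2 ^ q * (2 ^ q + 1) / 2 ∧
    Nat.card {g : Fin q → ZMod 2 × ZMod 2 //
        Odd (Finset.univ.filter fun i => g i = (1, 1)).card} =
      2 ^ q * (2 ^ q - 1) / 2 := by
  have hli {p : (Fin q → ZMod 2 × ZMod 2) → Prop} :
      LinearIndependent F fun g : {g // p g} => pauliKron F g.1 :=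
    (linearIndependent_pauliKron q).comp Subtype.val Subtype.val_injective
  refine ⟨hli.exists_basis_of_span_eq (evenPauliSpan_eq_symmMatrices q),
    hli.exists_basis_of_span_eq (oddPauliSpan_eq_skewMatrices q), ?_, ?_⟩
  · rw [Nat.card_eq_fintype_card, Fintype.card_subtype]
    exact (Nat.div_eq_of_eq_mul_right two_pos (two_mul_card_filter_even_countSigma3 q).symm).symm
  · rw [Nat.card_eq_fintype_card, Fintype.card_subtype]
    exact (Nat.div_eq_of_eq_mul_right two_pos (two_mul_card_filter_odd_countSigma3 q).symm).symm

/-- The `c_g` with an even number of `σ₃`-factors form a basis of the symmetric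
matrices, and those with an odd number form a basis of the skew-symmetric matrices;
these families have cardinalities `t(t+1)/2` and `t(t−1)/2` where `t = 2^q`. -/
theorem pauliKron_symm_skew_bases (F : Type*) [Field F] [CharZero F]
    (q : ℕ) (hq : 1 ≤ q) :
    (∃ b : Module.Basis {g : Fin q → ZMod 2 × ZMod 2 //
        Even (Finset.univ.filter fun i => g i = (1, 1)).card} F
        (symmMatrices F (Fin (2 ^ q))),
      ∀ g, (b g : Matrix (Fin (2 ^ q)) (Fin (2 ^ q)) F) = pauliKron F g.1) ∧
    (∃ b : Module.Basis {g : Fin q → ZMod 2 × ZMod 2 //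
        Odd (Finset.univ.filter fun i => g i = (1, 1)).card} F
        (skewMatrices F (Fin (2 ^ q))),
      ∀ g, (b g : Matrix (Fin (2 ^ q)) (Fin (2 ^ q)) F) = pauliKron F g.1) ∧
    Nat.card {g : Fin q → ZMod 2 × ZMod 2 //
        Even (Finset.univ.filter fun i => g i = (1, 1)).card} =
      2 ^ q * (2 ^ q + 1) / 2 ∧
    Nat.card {g : Fin q → ZMod 2 × ZMod 2 //
        Odd (Finset.univ.filter fun i => g i = (1, 1)).card} =
      2 ^ q * (2 ^ q - 1) / 2 :=
  pauliKron_symm_skew_bases_general F q
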